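/- Let T be a rooted binary tree with n leaves. For every positive integer m, every lattice point z ∈ ℤ^{Int(T)} lying in the dilate m·R_T can be written as a sum of m top-vectors of systems of disjoint paths in T. In particular, the CFN-MC polytope R_T is a normal lattice polytope. -/

import Mathlib

open Pointwise

/-- A rooted binary tree on the finite vertex type `V`, presented by its parent function:
the root is its own parent, every vertex reaches the root by iterating the parent map,
every vertex has either no children (a leaf) or exactly two children, and the root has
exactly two children (so the root has degree 2, leaves have degree 1, and all other
vertices have degree 3). -/
structure RBT (V : Type) [Fintype V] [DecidableEq V] : Type where
  root : V
  parent : V → V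
  parent_root : parent root = root
  reaches : ∀ v : V, ∃ k : ℕ, parent^[k] v = root
  binary : ∀ v : V,
    Nat.card {u : V // parent u = v ∧ u ≠ v} = 0 ∨
      Nat.card {u : V // parent u = v ∧ u ≠ v} = 2
  root_binary : Nat.card {u : V // parent u = root ∧ u ≠ root} = 2

namespace RBT

variable {V : Type} [Fintype V] [DecidableEq V] (T : RBT V)

/-- `u` is a child of `v` in `T`. -/
def isChild (u v : V) : Prop := T.parent u = v ∧ u ≠ v

/-- A leaf of `T` is a vertex with no children. -/
def isLeaf (v : V) : Prop := ∀ u : V, T.parent u = v → u = v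

/-- An internal vertex of `T` is a vertex which is not a leaf. -/
def isInternal (v : V) : Prop := ¬ T.isLeaf v

instance : DecidablePred T.isLeaf := fun v =>
  decidable_of_iff (∀ u : V, T.parent u = v → u = v) Iff.rfl

instance : DecidablePred T.isInternal := fun v =>
  inferInstanceAs (Decidable (¬ T.isLeaf v))

/-- `u` is a (weak) descendant of `v`, i.e. `v` lies on the path from `u` to the root. -/
def desc (u v : V) : Prop := ∃ k : ℕ, T.parent^[k] u = v

/-- `u` is a strict descendant of `v`. -/
def strictDesc (u v : V) : Prop := T.desc u v ∧ u ≠ v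

/-- `u` and `v` are adjacent vertices of `T`. -/
def adjacent (u v : V) : Prop := T.isChild u v ∨ T.isChild v u

instance : DecidableRel T.isChild := fun u v =>
  decidable_of_iff (T.parent u = v ∧ u ≠ v) Iff.rfl

instance : DecidableRel T.adjacent := fun u v =>
  inferInstanceAs (Decidable (T.isChild u v ∨ T.isChild v u))

/-- The set of edges (each edge being labelled by its endpoint farther from the root)
on the path from `l` up to the root. -/
def upEdges (l : V) : Set V := {u : V | u ≠ T.root ∧ T.desc l u}

/-- The edge set of the unique path in `T` joining the two members of an unordered
pair of vertices (edges are labelled by their endpoint farther from the root). -/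
def pathEdges : Sym2 V → Set V :=
  Sym2.lift ⟨fun l₁ l₂ => symmDiff (T.upEdges l₁) (T.upEdges l₂), fun _ _ => symmDiff_comm _ _⟩

/-- `v` is the lowest common ancestor of `l₁` and `l₂`: it is an ancestor of both, and it
descends from every common ancestor.  Equivalently, `v` is the unique vertex of the path
from `l₁` to `l₂` which is an ancestor of every vertex of that path. -/
def isLCA (l₁ l₂ v : V) : Prop :=
  T.desc l₁ v ∧ T.desc l₂ v ∧ ∀ w : V, T.desc l₁ w → T.desc l₂ w → T.desc v w

/-- `v` is the top vertex of the path joining the two members of the unordered pair `p`. -/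
def isTopOf (v : V) : Sym2 V → Prop :=
  Sym2.lift ⟨fun l₁ l₂ => T.isLCA l₁ l₂ v, fun a b => by
    simp only [eq_iff_iff, isLCA]
    constructor <;> rintro ⟨h₁, h₂, h₃⟩ <;> exact ⟨h₂, h₁, fun w hw₁ hw₂ => h₃ w hw₂ hw₁⟩⟩

end RBT

/-- A system of disjoint paths in `T`: a finite set of unordered pairs of distinct leaves,
such that the unique paths in `T` joining the pairs are pairwise edge-disjoint. -/
structure PathSystem {V : Type} [Fintype V] [DecidableEq V] (T : RBT V) : Type where
  pairs : Finset (Sym2 V)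
  leaf_mem : ∀ p ∈ pairs, ∀ l ∈ p, T.isLeaf l
  not_diag : ∀ p ∈ pairs, ¬ p.IsDiag
  edge_disjoint : (pairs : Set (Sym2 V)).Pairwise fun p q =>
    Disjoint (T.pathEdges p) (T.pathEdges q)

namespace PathSystem

variable {V : Type} [Fintype V] [DecidableEq V] {T : RBT V}

/-- The top-set of a system of disjoint paths: the set of top vertices of its paths. -/
def topSet (P : PathSystem T) : Set V := {v : V | ∃ p ∈ P.pairs, T.isTopOf v p}

/-- The top-vector of a system of disjoint paths, as a point of `ℝ^{Int(T)}`: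
the 0/1 indicator vector of its top-set. -/
noncomputable def topVector (P : PathSystem T) : {v : V // T.isInternal v} → ℝ := fun v =>
  Set.indicator P.topSet (fun _ => (1 : ℝ)) (v : V)

end PathSystem

namespace RBT

variable {V : Type} [Fintype V] [DecidableEq V] (T : RBT V)

/-- The set of top-vectors of all systems of disjoint paths in `T`. -/
noncomputable def topVectors : Set ({v : V // T.isInternal v} → ℝ) :=
  Set.range fun P : PathSystem T => P.topVector

/-- The CFN-MC polytope `R_T ⊆ ℝ^{Int(T)}`: the convex hull of the top-vectors of all
systems of disjoint paths in `T`. -/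
noncomputable def cfnmcPolytope : Set ({v : V // T.isInternal v} → ℝ) :=
  convexHull ℝ T.topVectors

end RBT

/-!
Bottom-up, define the capacity `cap m x v` of a vertex: `m` at a leaf, and
`min (m - x v) (cap c₁ + cap c₂ - 2 x v)` at an internal vertex with children `c₁, c₂`. It is
positively homogeneous and superadditive in `(m, x)`, so the inequalities
`0 ≤ x v ≤ cap 1 x c` (for every child `c` of `v`) cut out a convex set. Every top-vector
satisfies them: a path topped at `v` descends into each child `c` of `v` along a chain carrying
no other top, and such a chain forces `cap 1 x c ≥ 1`. Hence every point of `m • R_T`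
satisfies them with `cap m`. Conversely, for an integer vector `z` satisfying them,
`cap m z v` counts the layers, among `m`, that can keep a chain from a leaf up to `v` free of
path edges: each path topped at `v` consumes a free chain from both children and blocks its
layer. This lets one build `m` systems of disjoint paths from the leaves up, placing the `z v`
paths topped at `v` in layers with free chains in both children.
-/

open Finset

theorem Finset.exists_subset_card_le_and_card_sdiff_le {α : Type*} [DecidableEq α]
    (s : Finset α) {a b : ℕ} (h : #s ≤ a + b) : ∃ t ⊆ s, #t ≤ a ∧ #(s \ t) ≤ b := by
  obtain ⟨t, hts, ht⟩ := Finset.exists_subset_card_eq (min_le_left #s a)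
  refine ⟨t, hts, ht ▸ min_le_right _ _, ?_⟩
  rw [Finset.card_sdiff_of_subset hts, ht]
  omega

namespace RBT

variable {V : Type} [Fintype V] [DecidableEq V] (T : RBT V)

theorem desc_refl (v : V) : T.desc v v := ⟨0, rfl⟩

theorem desc_trans {u v w : V} (h₁ : T.desc u v) (h₂ : T.desc v w) : T.desc u w := by
  obtain ⟨k, rfl⟩ := h₁
  obtain ⟨l, rfl⟩ := h₂
  exact ⟨l + k, Function.iterate_add_apply _ _ _ _⟩

theorem desc_of_isChild {c v : V} (h : T.isChild c v) : T.desc c v := ⟨1, h.1⟩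

theorem eq_root_of_root_desc {v : V} (h : T.desc T.root v) : v = T.root := by
  obtain ⟨k, rfl⟩ := h
  exact Function.iterate_fixed T.parent_root k

/-- A cycle of the parent map would have to pass through the root, which is fixed. -/
theorem desc_antisymm {u v : V} (h₁ : T.desc u v) (h₂ : T.desc v u) : u = v := by
  obtain ⟨a, rfl⟩ := h₁
  obtain ⟨b, hb⟩ := h₂
  rcases Nat.eq_zero_or_pos a with rfl | ha
  · rfl
  have hper : Function.IsPeriodicPt T.parent (b + a) u := by
    rw [Function.IsPeriodicPt, Function.IsFixedPt, Function.iterate_add_apply, hb]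
  obtain ⟨k, hk⟩ := T.reaches u
  have hu : u = T.root := by
    rw [← (hper.mul_const k).eq, (Nat.sub_add_cancel (Nat.le_mul_of_pos_left k (by omega))).symm,
      Function.iterate_add_apply, hk, Function.iterate_fixed T.parent_root]
  subst hu
  rw [Function.iterate_fixed T.parent_root]

theorem desc_total {l u w : V} (hu : T.desc l u) (hw : T.desc l w) : T.desc u w ∨ T.desc w u := by
  obtain ⟨a, rfl⟩ := hu
  obtain ⟨b, rfl⟩ := hw
  rcases le_total a b with h | h
  · exact Or.inl ⟨b - a, by rw [← Function.iterate_add_apply, Nat.sub_add_cancel h]⟩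
  · exact Or.inr ⟨a - b, by rw [← Function.iterate_add_apply, Nat.sub_add_cancel h]⟩

theorem strictDesc_trans {u v w : V} (h₁ : T.strictDesc u v) (h₂ : T.strictDesc v w) :
    T.strictDesc u w :=
  ⟨T.desc_trans h₁.1 h₂.1, by rintro rfl; exact h₁.2 (T.desc_antisymm h₁.1 h₂.1)⟩

theorem strictDesc_of_desc_of_strictDesc {u v w : V} (h₁ : T.desc u v) (h₂ : T.strictDesc v w) :
    T.strictDesc u w :=
  ⟨T.desc_trans h₁ h₂.1, by rintro rfl; exact h₂.2 (T.desc_antisymm h₂.1 h₁)⟩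

theorem strictDesc_of_isChild {c v : V} (h : T.isChild c v) : T.strictDesc c v :=
  ⟨T.desc_of_isChild h, h.2⟩

theorem strictDesc_of_desc_of_not_desc {l₁ l₂ w c : V} (hw₁ : T.desc l₁ w) (hw₂ : ¬ T.desc l₂ w)
    (hc₁ : T.desc l₁ c) (hc₂ : T.desc l₂ c) : T.strictDesc w c := by
  refine ⟨(T.desc_total hw₁ hc₁).resolve_right fun h => hw₂ (T.desc_trans hc₂ h), ?_⟩
  rintro rfl
  exact hw₂ hc₂


theorem wellFounded_strictDesc : WellFounded T.strictDesc :=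
  haveI : IsTrans V T.strictDesc := ⟨fun _ _ _ => T.strictDesc_trans⟩
  haveI : Std.Irrefl T.strictDesc := ⟨fun _ h => h.2 rfl⟩
  Finite.wellFounded_of_trans_of_irrefl _

theorem exists_isChild_of_strictDesc {w v : V} (h : T.strictDesc w v) :
    ∃ c, T.isChild c v ∧ T.desc w c := by
  obtain ⟨⟨k, hk⟩, hne⟩ := h
  induction k generalizing w with
  | zero => exact absurd hk hne
  | succ k ih =>
    rw [Function.iterate_succ_apply] at hk
    by_cases hp : T.parent w = v
    · exact ⟨w, ⟨hp, hne⟩, T.desc_refl w⟩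
    · obtain ⟨c, hc, hwc⟩ := ih hp hk
      exact ⟨c, hc, T.desc_trans ⟨1, rfl⟩ hwc⟩

theorem eq_or_desc_of_isChild {c v u : V} (hc : T.isChild c v) (h : T.desc c u) :
    u = c ∨ T.desc v u := by
  obtain ⟨k, rfl⟩ := h
  cases k with
  | zero => exact Or.inl rfl
  | succ k => exact Or.inr ⟨k, by rw [Function.iterate_succ_apply, hc.1]⟩

theorem not_desc_of_isChild {c v : V} (hc : T.isChild c v) : ¬ T.desc v c :=
  fun h => hc.2 (T.desc_antisymm (T.desc_of_isChild hc) h)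

theorem not_desc_of_isChild_of_isChild {c₁ c₂ v w : V} (h₁ : T.isChild c₁ v)
    (h₂ : T.isChild c₂ v) (hne : c₁ ≠ c₂) (hw : T.desc w c₁) : ¬ T.desc w c₂ := by
  intro hw₂
  rcases T.desc_total hw hw₂ with h | h
  · rcases T.eq_or_desc_of_isChild h₁ h with rfl | h
    · exact hne rfl
    · exact T.not_desc_of_isChild h₂ h
  · rcases T.eq_or_desc_of_isChild h₂ h with rfl | h
    · exact hne rfl
    · exact T.not_desc_of_isChild h₁ h

theorem eq_of_desc_of_isLeaf {l u : V} (hl : T.isLeaf l) (h : T.desc u l) : u = l := by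
  obtain ⟨k, hk⟩ := h
  induction k generalizing u with
  | zero => exact hk
  | succ k ih =>
    rw [Function.iterate_succ_apply'] at hk
    exact ih (hl _ hk)

theorem isInternal_of_isChild {c v : V} (h : T.isChild c v) : T.isInternal v :=
  fun hv => h.2 (hv c h.1)

theorem exists_isChild_of_isInternal {v : V} (hv : T.isInternal v) :
    ∃ c₁ c₂, c₁ ≠ c₂ ∧ T.isChild c₁ v ∧ T.isChild c₂ v := by
  have hcard : Nat.card {u // T.isChild u v} = 2 := by
    refine (T.binary v).resolve_left fun h0 => hv fun u hu => ?_
    by_contra hne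
    exact (Finite.card_eq_zero_iff.mp h0).false ⟨u, hu, hne⟩
  obtain ⟨⟨c₁, h₁⟩, ⟨c₂, h₂⟩, hne, -⟩ := Nat.card_eq_two_iff.mp hcard
  exact ⟨c₁, c₂, fun h => hne (Subtype.ext h), h₁, h₂⟩

theorem isChild_iff {v c₁ c₂ : V} (hne : c₁ ≠ c₂) (h₁ : T.isChild c₁ v) (h₂ : T.isChild c₂ v)
    {c : V} : T.isChild c v ↔ c = c₁ ∨ c = c₂ := by
  refine ⟨fun hc => ?_, by rintro (rfl | rfl) <;> assumption⟩
  have hcard : Nat.card {u // T.isChild u v} = 2 :=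
    (T.binary v).resolve_left (Nat.card_ne_zero.mpr ⟨⟨⟨c₁, h₁⟩⟩, inferInstance⟩)
  obtain ⟨y, -, hy⟩ := (Nat.card_eq_two_iff' (⟨c₁, h₁⟩ : {u // T.isChild u v})).mp hcard
  by_cases hc₁ : c = c₁
  · exact Or.inl hc₁
  · right
    have e₂ := hy ⟨c₂, h₂⟩ fun h => hne (congrArg Subtype.val h).symm
    have e := hy ⟨c, hc⟩ fun h => hc₁ (congrArg Subtype.val h)
    exact congrArg Subtype.val (e.trans e₂.symm)

theorem eq_or_desc_or_desc {v c₁ c₂ u : V} (hne : c₁ ≠ c₂) (h₁ : T.isChild c₁ v)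
    (h₂ : T.isChild c₂ v) (hu : T.desc u v) : u = v ∨ T.desc u c₁ ∨ T.desc u c₂ := by
  by_cases huv : u = v
  · exact Or.inl huv
  obtain ⟨c, hc, huc⟩ := T.exists_isChild_of_strictDesc ⟨hu, huv⟩
  rcases (T.isChild_iff hne h₁ h₂).mp hc with rfl | rfl
  exacts [Or.inr (Or.inl huc), Or.inr (Or.inr huc)]

theorem binary_induction {motive : V → Prop} (leaf : ∀ v, T.isLeaf v → motive v)
    (node : ∀ v c₁ c₂, c₁ ≠ c₂ → T.isChild c₁ v → T.isChild c₂ v → motive c₁ → motive c₂ →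
      motive v) (v : V) : motive v := by
  induction v using T.wellFounded_strictDesc.induction with
  | _ v ih =>
    by_cases hv : T.isLeaf v
    · exact leaf v hv
    · obtain ⟨c₁, c₂, hne, h₁, h₂⟩ := T.exists_isChild_of_isInternal hv
      exact node v c₁ c₂ hne h₁ h₂ (ih c₁ (T.strictDesc_of_isChild h₁))
        (ih c₂ (T.strictDesc_of_isChild h₂))

section Capacity

variable {R : Type*} [CommRing R] [LinearOrder R]

noncomputable def cap (m : R) (x : {v // T.isInternal v} → R) : V → R :=
  T.wellFounded_strictDesc.fix fun v capBelow =>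
    if h : T.isLeaf v then m
    else min (m - x ⟨v, h⟩)
      (∑ c : {c // T.isChild c v}, capBelow c (T.strictDesc_of_isChild c.2) - 2 * x ⟨v, h⟩)

theorem cap_eq (m : R) (x : {v // T.isInternal v} → R) (v : V) :
    T.cap m x v = if h : T.isLeaf v then m
      else min (m - x ⟨v, h⟩) (∑ c : {c // T.isChild c v}, T.cap m x c - 2 * x ⟨v, h⟩) := by
  rw [cap, WellFounded.fix_eq]

theorem cap_of_isLeaf {m : R} {x : {v // T.isInternal v} → R} {v : V} (hv : T.isLeaf v) :
    T.cap m x v = m := by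
  rw [cap_eq, dif_pos hv]

theorem cap_of_isChild {m : R} {x : {v // T.isInternal v} → R} {v c₁ c₂ : V} (hne : c₁ ≠ c₂)
    (h₁ : T.isChild c₁ v) (h₂ : T.isChild c₂ v) :
    T.cap m x v = min (m - x ⟨v, T.isInternal_of_isChild h₁⟩)
      (T.cap m x c₁ + T.cap m x c₂ - 2 * x ⟨v, T.isInternal_of_isChild h₁⟩) := by
  rw [cap_eq, dif_neg (T.isInternal_of_isChild h₁)]
  congr 2
  rw [← Finset.sum_subtype {c₁, c₂} (fun c => by simp [T.isChild_iff hne h₁ h₂])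
    (fun c => T.cap m x c), Finset.sum_pair hne]

theorem cap_smul [IsOrderedRing R] {s : R} (hs : 0 ≤ s) (m : R)
    (x : {v // T.isInternal v} → R) (v : V) : T.cap (s * m) (s • x) v = s * T.cap m x v := by
  induction v using T.binary_induction with
  | leaf v hv => rw [T.cap_of_isLeaf hv, T.cap_of_isLeaf hv]
  | node v c₁ c₂ hne h₁ h₂ ih₁ ih₂ =>
    rw [T.cap_of_isChild hne h₁ h₂, T.cap_of_isChild hne h₁ h₂, ih₁, ih₂,
      mul_min_of_nonneg _ _ hs, Pi.smul_apply, smul_eq_mul]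
    ring_nf

theorem cap_add_le [IsStrictOrderedRing R] (m m' : R) (x y : {v // T.isInternal v} → R) (v : V) :
    T.cap m x v + T.cap m' y v ≤ T.cap (m + m') (x + y) v := by
  induction v using T.binary_induction with
  | leaf v hv => rw [T.cap_of_isLeaf hv, T.cap_of_isLeaf hv, T.cap_of_isLeaf hv]
  | node v c₁ c₂ hne h₁ h₂ ih₁ ih₂ =>
    rw [T.cap_of_isChild hne h₁ h₂, T.cap_of_isChild hne h₁ h₂, T.cap_of_isChild hne h₁ h₂]
    refine min_add_min_le_min_add_add.trans (min_le_min ?_ ?_) <;>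
      simp only [Pi.add_apply] <;> linarith

theorem cap_intCast [IsStrictOrderedRing R] (m : ℤ) (z : {v // T.isInternal v} → ℤ) (v : V) :
    T.cap (m : R) (fun u => (z u : R)) v = T.cap m z v := by
  induction v using T.binary_induction with
  | leaf v hv => rw [T.cap_of_isLeaf hv, T.cap_of_isLeaf hv]
  | node v c₁ c₂ hne h₁ h₂ ih₁ ih₂ =>
    rw [T.cap_of_isChild hne h₁ h₂, T.cap_of_isChild hne h₁ h₂, ih₁, ih₂]
    push_cast
    rfl

def Feasible (m : R) (x : {v // T.isInternal v} → R) : Prop :=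
  ∀ v, 0 ≤ x v ∧ ∀ c, T.isChild c v → x v ≤ T.cap m x c

variable {T}

theorem Feasible.smul [IsOrderedRing R] {m s : R} {x : {v // T.isInternal v} → R}
    (h : T.Feasible m x) (hs : 0 ≤ s) : T.Feasible (s * m) (s • x) := fun v =>
  ⟨mul_nonneg hs (h v).1, fun c hc => by
    rw [T.cap_smul hs]
    exact mul_le_mul_of_nonneg_left ((h v).2 c hc) hs⟩

theorem feasible_intCast_iff [IsStrictOrderedRing R] {m : ℤ} {z : {v // T.isInternal v} → ℤ} :
    T.Feasible (m : R) (fun v => (z v : R)) ↔ T.Feasible m z := by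
  simp only [Feasible, cap_intCast, Int.cast_nonneg_iff, Int.cast_le]

theorem Feasible.cap_le [IsStrictOrderedRing R] {m : R} {x : {v // T.isInternal v} → R}
    (h : T.Feasible m x) (v : V) : T.cap m x v ≤ m := by
  by_cases hv : T.isLeaf v
  · rw [T.cap_of_isLeaf hv]
  · obtain ⟨c₁, c₂, hne, h₁, h₂⟩ := T.exists_isChild_of_isInternal hv
    rw [T.cap_of_isChild hne h₁ h₂]
    linarith [min_le_left (m - x ⟨v, hv⟩) (T.cap m x c₁ + T.cap m x c₂ - 2 * x ⟨v, hv⟩),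
      (h ⟨v, hv⟩).1]

theorem Feasible.cap_nonneg [IsStrictOrderedRing R] {m : R} {x : {v // T.isInternal v} → R}
    (h : T.Feasible m x) (hm : 0 ≤ m) (v : V) : 0 ≤ T.cap m x v := by
  by_cases hv : T.isLeaf v
  · rwa [T.cap_of_isLeaf hv]
  · obtain ⟨c₁, c₂, hne, h₁, h₂⟩ := T.exists_isChild_of_isInternal hv
    rw [T.cap_of_isChild hne h₁ h₂]
    have := (h ⟨v, hv⟩).2 c₁ h₁
    have := (h ⟨v, hv⟩).2 c₂ h₂
    have := h.cap_le c₁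
    exact le_min (by linarith) (by linarith)

theorem convex_setOf_feasible {𝕜 : Type*} [Field 𝕜] [LinearOrder 𝕜] [IsStrictOrderedRing 𝕜] :
    Convex 𝕜 {x : {v // T.isInternal v} → 𝕜 | T.Feasible 1 x} := by
  intro x hx y hy a b ha hb hab v
  refine ⟨add_nonneg (mul_nonneg ha (hx v).1) (mul_nonneg hb (hy v).1), fun c hc => ?_⟩
  calc a * x v + b * y v ≤ T.cap (a * 1) (a • x) c + T.cap (b * 1) (b • y) c := by
        rw [T.cap_smul ha, T.cap_smul hb]
        gcongr
        exacts [(hx v).2 c hc, (hy v).2 c hc]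
    _ ≤ T.cap 1 (a • x + b • y) c := by
        simpa [hab] using T.cap_add_le (a * 1) (b * 1) (a • x) (b • y) c

end Capacity


def HasChainAvoiding (S : Set V) (c : V) : Prop :=
  ∃ l, T.isLeaf l ∧ T.desc l c ∧ ∀ u, T.desc l u → T.desc u c → u ∉ S

variable {T}

theorem isLCA.symm {l₁ l₂ v : V} (h : T.isLCA l₁ l₂ v) : T.isLCA l₂ l₁ v :=
  ⟨h.2.1, h.1, fun w hw₁ hw₂ => h.2.2 w hw₂ hw₁⟩

theorem isLCA.unique {l₁ l₂ v v' : V} (h : T.isLCA l₁ l₂ v) (h' : T.isLCA l₁ l₂ v') : v = v' :=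
  T.desc_antisymm (h.2.2 v' h'.1 h'.2.1) (h'.2.2 v h.1 h.2.1)

theorem isLCA.mem_upEdges_diff_iff {l₁ l₂ v w : V} (h : T.isLCA l₁ l₂ v) :
    w ∈ T.upEdges l₁ ∧ w ∉ T.upEdges l₂ ↔ T.desc l₁ w ∧ T.strictDesc w v := by
  simp only [upEdges, Set.mem_ofPred_eq, not_and]
  constructor
  · rintro ⟨⟨hroot, hw₁⟩, hw₂⟩
    exact ⟨hw₁, T.strictDesc_of_desc_of_not_desc hw₁ (hw₂ hroot) h.1 h.2.1⟩
  · rintro ⟨hw₁, hwv⟩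
    refine ⟨⟨fun hroot => hwv.2 ?_, hw₁⟩, fun _ hw₂ => hwv.2 ?_⟩
    · rw [hroot] at hwv ⊢
      exact (T.eq_root_of_root_desc hwv.1).symm
    · exact T.desc_antisymm hwv.1 (h.2.2 w hw₁ hw₂)

theorem isLCA.mem_pathEdges_iff {l₁ l₂ v w : V} (h : T.isLCA l₁ l₂ v) :
    w ∈ T.pathEdges s(l₁, l₂) ↔ (T.desc l₁ w ∨ T.desc l₂ w) ∧ T.strictDesc w v := by
  change w ∈ symmDiff (T.upEdges l₁) (T.upEdges l₂) ↔ _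
  rw [Set.mem_symmDiff, h.mem_upEdges_diff_iff, h.symm.mem_upEdges_diff_iff, or_and_right]

theorem strictDesc_of_mem_pathEdges {l₁ l₂ c w : V} (h₁ : T.desc l₁ c) (h₂ : T.desc l₂ c)
    (hw : w ∈ T.pathEdges s(l₁, l₂)) : T.strictDesc w c := by
  change w ∈ symmDiff (T.upEdges l₁) (T.upEdges l₂) at hw
  rcases hw with ⟨⟨hroot, hw₁⟩, hw₂⟩ | ⟨⟨hroot, hw₂⟩, hw₁⟩
  · exact T.strictDesc_of_desc_of_not_desc hw₁ (fun h => hw₂ ⟨hroot, h⟩) h₁ h₂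
  · exact T.strictDesc_of_desc_of_not_desc hw₂ (fun h => hw₁ ⟨hroot, h⟩) h₂ h₁

theorem isLCA_of_isChild {l₁ l₂ c₁ c₂ v : V} (hne : c₁ ≠ c₂) (h₁ : T.isChild c₁ v)
    (h₂ : T.isChild c₂ v) (hl₁ : T.desc l₁ c₁) (hl₂ : T.desc l₂ c₂) : T.isLCA l₁ l₂ v := by
  have hv₁ := T.desc_trans hl₁ (T.desc_of_isChild h₁)
  refine ⟨hv₁, T.desc_trans hl₂ (T.desc_of_isChild h₂), fun w hw₁ hw₂ => ?_⟩
  rcases T.desc_total hv₁ hw₁ with hvw | hwv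
  · exact hvw
  by_cases hw : w = v
  · exact hw ▸ T.desc_refl v
  exfalso
  obtain ⟨c, hc, hwc⟩ := T.exists_isChild_of_strictDesc ⟨hwv, hw⟩
  rcases (T.isChild_iff hne h₁ h₂).mp hc with rfl | rfl
  · exact T.not_desc_of_isChild_of_isChild h₂ h₁ hne.symm hl₂ (T.desc_trans hw₂ hwc)
  · exact T.not_desc_of_isChild_of_isChild h₁ h₂ hne hl₁ (T.desc_trans hw₁ hwc)

theorem isLCA.exists_isChild {l₁ l₂ v : V} (hl₁ : T.isLeaf l₁) (hl₂ : T.isLeaf l₂)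
    (hne : l₁ ≠ l₂) (h : T.isLCA l₁ l₂ v) :
    ∃ c₁ c₂, c₁ ≠ c₂ ∧ T.isChild c₁ v ∧ T.isChild c₂ v ∧ T.desc l₁ c₁ ∧ T.desc l₂ c₂ := by
  have hv₁ : l₁ ≠ v := by
    rintro rfl
    exact hne (T.eq_of_desc_of_isLeaf hl₁ h.2.1).symm
  have hv₂ : l₂ ≠ v := by
    rintro rfl
    exact hne (T.eq_of_desc_of_isLeaf hl₂ h.1)
  obtain ⟨c₁, h₁, hlc₁⟩ := T.exists_isChild_of_strictDesc ⟨h.1, hv₁⟩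
  obtain ⟨c₂, h₂, hlc₂⟩ := T.exists_isChild_of_strictDesc ⟨h.2.1, hv₂⟩
  refine ⟨c₁, c₂, ?_, h₁, h₂, hlc₁, hlc₂⟩
  rintro rfl
  exact T.not_desc_of_isChild h₁ (h.2.2 c₁ hlc₁ hlc₂)

theorem isLCA.isChild_mem_pathEdges {l₁ l₂ u d : V} (hl₁ : T.isLeaf l₁) (hl₂ : T.isLeaf l₂)
    (hne : l₁ ≠ l₂) (h : T.isLCA l₁ l₂ u) (hd : T.isChild d u) : d ∈ T.pathEdges s(l₁, l₂) := by
  obtain ⟨e₁, e₂, hee, he₁, he₂, hl₁e, hl₂e⟩ := h.exists_isChild hl₁ hl₂ hne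
  rw [h.mem_pathEdges_iff]
  rcases (T.isChild_iff hee he₁ he₂).mp hd with rfl | rfl
  exacts [⟨Or.inl hl₁e, T.strictDesc_of_isChild hd⟩, ⟨Or.inr hl₂e, T.strictDesc_of_isChild hd⟩]

end RBT

namespace PathSystem

variable {V : Type} [Fintype V] [DecidableEq V] {T : RBT V}

theorem exists_eq_mk {P : PathSystem T} {p : Sym2 V} (hp : p ∈ P.pairs) :
    ∃ l₁ l₂, p = s(l₁, l₂) ∧ T.isLeaf l₁ ∧ T.isLeaf l₂ ∧ l₁ ≠ l₂ := by
  induction p using Sym2.ind with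
  | _ l₁ l₂ =>
    exact ⟨l₁, l₂, rfl, P.leaf_mem _ hp l₁ (Sym2.mem_mk_left _ _),
      P.leaf_mem _ hp l₂ (Sym2.mem_mk_right _ _), fun h => P.not_diag _ hp (by simp [h])⟩

/-- A path with top `v` leaves every child of `v` through a chain which, by edge-disjointness,
carries no other top: a top `u` on it would put the edge below `u` into two paths. -/
theorem hasChainAvoiding_topSet_of_isLCA (P : PathSystem T) {l l' v c : V}
    (hp : s(l, l') ∈ P.pairs) (htop : T.isLCA l l' v) (hl : T.desc l c) (hc : T.isChild c v) :
    T.HasChainAvoiding P.topSet c := by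
  refine ⟨l, P.leaf_mem _ hp l (Sym2.mem_mk_left _ _), hl, fun u hlu huc ⟨q, hq, hqu⟩ => ?_⟩
  obtain ⟨k₁, k₂, rfl, hk₁, hk₂, hkne⟩ := exists_eq_mk hq
  obtain ⟨e, -, -, he, -⟩ := hqu.exists_isChild hk₁ hk₂ hkne
  have hne : l ≠ u := by
    rintro rfl
    exact T.isInternal_of_isChild he (P.leaf_mem _ hp l (Sym2.mem_mk_left _ _))
  obtain ⟨d, hd, hld⟩ := T.exists_isChild_of_strictDesc ⟨hlu, hne⟩
  have hdq : d ∈ T.pathEdges s(k₁, k₂) := hqu.isChild_mem_pathEdges hk₁ hk₂ hkne hd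
  have hdp : d ∈ T.pathEdges s(l, l') := htop.mem_pathEdges_iff.mpr
    ⟨Or.inl hld, T.strictDesc_of_desc_of_strictDesc (T.desc_trans (T.desc_of_isChild hd) huc)
      (T.strictDesc_of_isChild hc)⟩
  have hpq : s(l, l') ≠ s(k₁, k₂) := by
    intro h
    rw [← h] at hqu
    exact T.not_desc_of_isChild hc (htop.unique hqu ▸ huc)
  exact Set.disjoint_left.mp (P.edge_disjoint hp hq hpq) hdp hdq

theorem hasChainAvoiding_topSet (P : PathSystem T) {v c : V} (hv : v ∈ P.topSet)
    (hc : T.isChild c v) : T.HasChainAvoiding P.topSet c := by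
  obtain ⟨p, hp, htop⟩ := hv
  obtain ⟨l₁, l₂, rfl, hl₁, hl₂, hne⟩ := exists_eq_mk hp
  obtain ⟨c₁, c₂, hcc, h₁, h₂, hlc₁, hlc₂⟩ := htop.exists_isChild hl₁ hl₂ hne
  rcases (T.isChild_iff hcc h₁ h₂).mp hc with rfl | rfl
  · exact P.hasChainAvoiding_topSet_of_isLCA hp htop hlc₁ hc
  · exact P.hasChainAvoiding_topSet_of_isLCA (Sym2.eq_swap ▸ hp) htop.symm hlc₂ hc

theorem topVector_of_mem (P : PathSystem T) {v : {v // T.isInternal v}} (hv : ↑v ∈ P.topSet) :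
    P.topVector v = 1 :=
  Set.indicator_of_mem hv _

theorem topVector_of_notMem (P : PathSystem T) {v : {v // T.isInternal v}}
    (hv : ↑v ∉ P.topSet) : P.topVector v = 0 :=
  Set.indicator_of_notMem hv _

open Classical in
theorem sum_topVector_apply {ι : Type*} [Fintype ι] (P : ι → PathSystem T)
    (u : {v // T.isInternal v}) :
    (∑ i, (P i).topVector) u = #{i | ↑u ∈ (P i).topSet} := by
  simp [Finset.sum_apply, topVector, Set.indicator_apply]

theorem cap_topVector (P : PathSystem T) (w : V) :
    0 ≤ T.cap 1 P.topVector w ∧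
      (T.HasChainAvoiding P.topSet w → 1 ≤ T.cap 1 P.topVector w) := by
  induction w using T.binary_induction with
  | leaf w hw => simp [T.cap_of_isLeaf hw]
  | node w c₁ c₂ hne h₁ h₂ ih₁ ih₂ =>
    rw [T.cap_of_isChild hne h₁ h₂]
    by_cases hw : w ∈ P.topSet
    · rw [P.topVector_of_mem (v := ⟨w, _⟩) hw]
      have := ih₁.2 (P.hasChainAvoiding_topSet hw h₁)
      have := ih₂.2 (P.hasChainAvoiding_topSet hw h₂)
      refine ⟨le_min (by norm_num) (by linarith), fun ⟨_, _, hlw, hfree⟩ => ?_⟩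
      exact absurd hw (hfree w hlw (T.desc_refl w))
    · rw [P.topVector_of_notMem (v := ⟨w, _⟩) hw]
      refine ⟨le_min (by norm_num) (by linarith [ih₁.1, ih₂.1]), fun ⟨l, hl, hlw, hfree⟩ => ?_⟩
      have hlw' : l ≠ w := by
        rintro rfl
        exact T.isInternal_of_isChild h₁ hl
      obtain ⟨d, hd, hld⟩ := T.exists_isChild_of_strictDesc ⟨hlw, hlw'⟩
      have hdfree : T.HasChainAvoiding P.topSet d :=
        ⟨l, hl, hld, fun u hlu hud => hfree u hlu (T.desc_trans hud (T.desc_of_isChild hd))⟩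
      rcases (T.isChild_iff hne h₁ h₂).mp hd with rfl | rfl
      · have := ih₁.2 hdfree
        exact le_min (by norm_num) (by linarith [ih₂.1])
      · have := ih₂.2 hdfree
        exact le_min (by norm_num) (by linarith [ih₁.1])

theorem topVector_feasible (P : PathSystem T) : T.Feasible 1 P.topVector := by
  refine fun v => ⟨Set.indicator_nonneg (fun _ _ => zero_le_one) _, fun c hc => ?_⟩
  by_cases hv : ↑v ∈ P.topSet
  · rw [P.topVector_of_mem hv]
    exact (P.cap_topVector c).2 (P.hasChainAvoiding_topSet hv hc)
  · rw [P.topVector_of_notMem hv]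
    exact (P.cap_topVector c).1

def empty : PathSystem T := ⟨∅, by simp, by simp, by simp⟩

def union (P Q : PathSystem T)
    (h : ∀ p ∈ P.pairs, ∀ q ∈ Q.pairs, Disjoint (T.pathEdges p) (T.pathEdges q)) :
    PathSystem T where
  pairs := P.pairs ∪ Q.pairs
  leaf_mem p hp := (Finset.mem_union.mp hp).elim (P.leaf_mem p) (Q.leaf_mem p)
  not_diag p hp := (Finset.mem_union.mp hp).elim (P.not_diag p) (Q.not_diag p)
  edge_disjoint := by
    rw [Finset.coe_union, Set.pairwise_union]
    exact ⟨P.edge_disjoint, Q.edge_disjoint, fun p hp q hq _ => ⟨h p hp q hq, (h p hp q hq).symm⟩⟩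

def insertPath (P : PathSystem T) {l₁ l₂ : V} (hl₁ : T.isLeaf l₁) (hl₂ : T.isLeaf l₂)
    (hne : l₁ ≠ l₂) (h : ∀ q ∈ P.pairs, Disjoint (T.pathEdges s(l₁, l₂)) (T.pathEdges q)) :
    PathSystem T where
  pairs := insert s(l₁, l₂) P.pairs
  leaf_mem p hp := by
    rcases Finset.mem_insert.mp hp with rfl | hp
    · intro l hl
      rcases Sym2.mem_iff.mp hl with rfl | rfl <;> assumption
    · exact P.leaf_mem p hp
  not_diag p hp := by
    rcases Finset.mem_insert.mp hp with rfl | hp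
    · exact Sym2.mk_isDiag_iff.not.mpr hne
    · exact P.not_diag p hp
  edge_disjoint := by
    rw [Finset.coe_insert, Set.pairwise_insert]
    exact ⟨P.edge_disjoint, fun q hq _ => ⟨h q hq, (h q hq).symm⟩⟩

theorem topSet_union (P Q : PathSystem T)
    (h : ∀ p ∈ P.pairs, ∀ q ∈ Q.pairs, Disjoint (T.pathEdges p) (T.pathEdges q)) :
    (P.union Q h).topSet = P.topSet ∪ Q.topSet := by
  ext v
  simp only [topSet, union, Finset.mem_union, Set.mem_union, Set.mem_ofPred_eq, or_and_right,
    exists_or]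

theorem topSet_insertPath (P : PathSystem T) {l₁ l₂ v : V} (hl₁ : T.isLeaf l₁)
    (hl₂ : T.isLeaf l₂) (hne : l₁ ≠ l₂)
    (h : ∀ q ∈ P.pairs, Disjoint (T.pathEdges s(l₁, l₂)) (T.pathEdges q)) (hv : T.isLCA l₁ l₂ v) :
    (P.insertPath hl₁ hl₂ hne h).topSet = insert v P.topSet := by
  ext u
  simp only [topSet, insertPath, Finset.mem_insert, Set.mem_insert_iff, Set.mem_ofPred_eq,
    exists_eq_or_imp]
  exact or_congr ⟨fun hu => hu.unique hv, fun hu => hu ▸ hv⟩ Iff.rfl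

def LeavesBelow (P : PathSystem T) (v : V) : Prop := ∀ p ∈ P.pairs, ∀ l ∈ p, T.desc l v

theorem LeavesBelow.strictDesc_of_mem_pathEdges {P : PathSystem T} {c w : V} {p : Sym2 V}
    (hP : P.LeavesBelow c) (hp : p ∈ P.pairs) (hw : w ∈ T.pathEdges p) : T.strictDesc w c := by
  obtain ⟨l₁, l₂, rfl, -⟩ := exists_eq_mk hp
  exact T.strictDesc_of_mem_pathEdges (hP _ hp l₁ (Sym2.mem_mk_left _ _))
    (hP _ hp l₂ (Sym2.mem_mk_right _ _)) hw

theorem LeavesBelow.desc_of_mem_topSet {P : PathSystem T} {c u : V} (hP : P.LeavesBelow c)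
    (hu : u ∈ P.topSet) : T.desc u c := by
  obtain ⟨p, hp, htop⟩ := hu
  obtain ⟨l₁, l₂, rfl, -⟩ := exists_eq_mk hp
  exact htop.2.2 c (hP _ hp l₁ (Sym2.mem_mk_left _ _)) (hP _ hp l₂ (Sym2.mem_mk_right _ _))

theorem LeavesBelow.disjoint_pathEdges {P Q : PathSystem T} {c₁ c₂ v : V} (hne : c₁ ≠ c₂)
    (h₁ : T.isChild c₁ v) (h₂ : T.isChild c₂ v) (hP : P.LeavesBelow c₁) (hQ : Q.LeavesBelow c₂) :
    ∀ p ∈ P.pairs, ∀ q ∈ Q.pairs, Disjoint (T.pathEdges p) (T.pathEdges q) :=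
  fun _ hp _ hq => Set.disjoint_left.mpr fun _ hwp hwq =>
    T.not_desc_of_isChild_of_isChild h₁ h₂ hne (hP.strictDesc_of_mem_pathEdges hp hwp).1
      (hQ.strictDesc_of_mem_pathEdges hq hwq).1

def AvoidsChain (P : PathSystem T) (l v : V) : Prop :=
  ∀ p ∈ P.pairs, ∀ w, T.desc l w → T.strictDesc w v → w ∉ T.pathEdges p

def HasFreeChain (P : PathSystem T) (v : V) : Prop :=
  ∃ l, T.isLeaf l ∧ T.desc l v ∧ P.AvoidsChain l v

theorem LeavesBelow.avoidsChain {P : PathSystem T} {c l v : V} (hP : P.LeavesBelow c)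
    (h : P.AvoidsChain l c) : P.AvoidsChain l v :=
  fun p hp w hlw _ hw => h p hp w hlw (hP.strictDesc_of_mem_pathEdges hp hw) hw

theorem LeavesBelow.avoidsChain_of_not_desc {P : PathSystem T} {c l v : V}
    (hP : P.LeavesBelow c) (hl : ¬ T.desc l c) : P.AvoidsChain l v :=
  fun _ hp _ hlw _ hw => hl (T.desc_trans hlw (hP.strictDesc_of_mem_pathEdges hp hw).1)

theorem AvoidsChain.union {P Q : PathSystem T} {l v : V}
    {h : ∀ p ∈ P.pairs, ∀ q ∈ Q.pairs, Disjoint (T.pathEdges p) (T.pathEdges q)}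
    (hP : P.AvoidsChain l v) (hQ : Q.AvoidsChain l v) : (P.union Q h).AvoidsChain l v := by
  intro p hp
  rcases Finset.mem_union.mp hp with hp | hp
  exacts [hP p hp, hQ p hp]

theorem disjoint_pathEdges_of_avoidsChain {P : PathSystem T} {l₁ l₂ v : V}
    (hv : T.isLCA l₁ l₂ v) (h₁ : P.AvoidsChain l₁ v) (h₂ : P.AvoidsChain l₂ v) :
    ∀ q ∈ P.pairs, Disjoint (T.pathEdges s(l₁, l₂)) (T.pathEdges q) := by
  refine fun q hq => Set.disjoint_left.mpr fun w hw hwq => ?_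
  obtain ⟨hl | hl, hwv⟩ := hv.mem_pathEdges_iff.mp hw
  exacts [h₁ q hq w hl hwv hwq, h₂ q hq w hl hwv hwq]

theorem exists_join {P₁ P₂ : PathSystem T} {v c₁ c₂ : V} (hne : c₁ ≠ c₂) (h₁ : T.isChild c₁ v)
    (h₂ : T.isChild c₂ v) (hP₁ : P₁.LeavesBelow c₁) (hP₂ : P₂.LeavesBelow c₂) :
    ∃ Q : PathSystem T, Q.LeavesBelow v ∧ Q.topSet = P₁.topSet ∪ P₂.topSet ∧
      (∀ l, T.desc l c₁ → P₁.AvoidsChain l c₁ → Q.AvoidsChain l v) ∧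
      (∀ l, T.desc l c₂ → P₂.AvoidsChain l c₂ → Q.AvoidsChain l v) := by
  refine ⟨P₁.union P₂ (hP₁.disjoint_pathEdges hne h₁ h₂ hP₂), fun p hp l hl => ?_,
    topSet_union _ _ _, fun l hlc hfree => ?_, fun l hlc hfree => ?_⟩
  · rcases Finset.mem_union.mp hp with hp | hp
    exacts [T.desc_trans (hP₁ p hp l hl) (T.desc_of_isChild h₁),
      T.desc_trans (hP₂ p hp l hl) (T.desc_of_isChild h₂)]
  · exact (hP₁.avoidsChain hfree).union
      (hP₂.avoidsChain_of_not_desc (T.not_desc_of_isChild_of_isChild h₁ h₂ hne hlc))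
  · exact (hP₁.avoidsChain_of_not_desc (T.not_desc_of_isChild_of_isChild h₂ h₁ hne.symm hlc)).union
      (hP₂.avoidsChain hfree)

theorem exists_join_of_hasFreeChain {P₁ P₂ : PathSystem T} {v c₁ c₂ : V} (hne : c₁ ≠ c₂)
    (h₁ : T.isChild c₁ v) (h₂ : T.isChild c₂ v) (hP₁ : P₁.LeavesBelow c₁)
    (hP₂ : P₂.LeavesBelow c₂) (hf₁ : P₁.HasFreeChain c₁) (hf₂ : P₂.HasFreeChain c₂) :
    ∃ Q : PathSystem T, Q.LeavesBelow v ∧ Q.topSet = insert v (P₁.topSet ∪ P₂.topSet) := by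
  obtain ⟨l₁, hl₁, hlc₁, hfree₁⟩ := hf₁
  obtain ⟨l₂, hl₂, hlc₂, hfree₂⟩ := hf₂
  obtain ⟨U, hUv, hUtop, hU₁, hU₂⟩ := exists_join hne h₁ h₂ hP₁ hP₂
  have hv : T.isLCA l₁ l₂ v := T.isLCA_of_isChild hne h₁ h₂ hlc₁ hlc₂
  have hl : l₁ ≠ l₂ := by
    rintro rfl
    exact T.not_desc_of_isChild_of_isChild h₁ h₂ hne hlc₁ hlc₂
  refine ⟨U.insertPath hl₁ hl₂ hl
    (disjoint_pathEdges_of_avoidsChain hv (hU₁ l₁ hlc₁ hfree₁) (hU₂ l₂ hlc₂ hfree₂)),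
    fun p hp l hlp => ?_, by rw [topSet_insertPath _ _ _ _ _ hv, hUtop]⟩
  rcases Finset.mem_insert.mp hp with rfl | hp
  · rcases Sym2.mem_iff.mp hlp with rfl | rfl
    exacts [hv.1, hv.2.1]
  · exact hUv p hp l hlp

end PathSystem

namespace RBT

variable {V : Type} [Fintype V] [DecidableEq V] {T : RBT V}

open Classical in
structure IsDecomposition {m : ℕ} (z : {v // T.isInternal v} → ℤ) (v : V) (D : Finset (Fin m))
    (P : Fin m → PathSystem T) : Prop where
  leavesBelow : ∀ i, (P i).LeavesBelow v
  card_topSet : ∀ u : {u // T.isInternal u}, T.desc u v → (#{i | ↑u ∈ (P i).topSet} : ℤ) = z u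
  hasFreeChain : ∀ i ∈ D, (P i).HasFreeChain v

theorem isDecomposition_empty {m : ℕ} {z : {v // T.isInternal v} → ℤ} {v : V} (hv : T.isLeaf v)
    (D : Finset (Fin m)) : IsDecomposition z v D fun _ => PathSystem.empty := by
  refine ⟨fun _ _ hp => absurd hp (notMem_empty _), fun u hu => ?_,
    fun _ _ => ⟨v, hv, T.desc_refl v, fun _ hp => absurd hp (notMem_empty _)⟩⟩
  exact absurd (T.eq_of_desc_of_isLeaf hv hu ▸ hv) u.2

section Join

variable {m : ℕ} {v c₁ c₂ : V} {A : Finset (Fin m)} {P₁ P₂ Q : Fin m → PathSystem T}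

open Classical in
theorem card_topSet_join_self (h₁ : T.isChild c₁ v) (h₂ : T.isChild c₂ v)
    (hP₁ : ∀ i, (P₁ i).LeavesBelow c₁) (hP₂ : ∀ i, (P₂ i).LeavesBelow c₂)
    (hQ : ∀ i u, u ∈ (Q i).topSet ↔ u ∈ (P₁ i).topSet ∨ u ∈ (P₂ i).topSet ∨ (u = v ∧ i ∈ A)) :
    #{i | v ∈ (Q i).topSet} = #A := by
  congr 1
  ext i
  have n₁ : v ∉ (P₁ i).topSet := fun h => T.not_desc_of_isChild h₁ ((hP₁ i).desc_of_mem_topSet h)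
  have n₂ : v ∉ (P₂ i).topSet := fun h => T.not_desc_of_isChild h₂ ((hP₂ i).desc_of_mem_topSet h)
  simp [hQ, n₁, n₂]

open Classical in
theorem card_topSet_join_of_desc (hne : c₁ ≠ c₂) (h₁ : T.isChild c₁ v) (h₂ : T.isChild c₂ v)
    (hP₂ : ∀ i, (P₂ i).LeavesBelow c₂)
    (hQ : ∀ i u, u ∈ (Q i).topSet ↔ u ∈ (P₁ i).topSet ∨ u ∈ (P₂ i).topSet ∨ (u = v ∧ i ∈ A))
    {u : V} (hu : T.desc u c₁) : #{i | u ∈ (Q i).topSet} = #{i | u ∈ (P₁ i).topSet} := by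
  congr 1
  ext i
  have n₂ : u ∉ (P₂ i).topSet := fun h =>
    T.not_desc_of_isChild_of_isChild h₁ h₂ hne hu ((hP₂ i).desc_of_mem_topSet h)
  have nv : u ≠ v := fun h => T.not_desc_of_isChild h₁ (h ▸ hu)
  simp [hQ, n₂, nv]

theorem IsDecomposition.join {z : {v // T.isInternal v} → ℤ} {D₁ D₂ : Finset (Fin m)}
    (hne : c₁ ≠ c₂) (h₁ : T.isChild c₁ v) (h₂ : T.isChild c₂ v)
    (hP₁ : IsDecomposition z c₁ (D₁ ∪ A) P₁) (hP₂ : IsDecomposition z c₂ (D₂ ∪ A) P₂)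
    (hA : (#A : ℤ) = z ⟨v, T.isInternal_of_isChild h₁⟩) (hAD : Disjoint A (D₁ ∪ D₂)) :
    ∃ P, IsDecomposition z v (D₁ ∪ D₂) P := by
  have hlayer : ∀ i, ∃ Q : PathSystem T, Q.LeavesBelow v ∧
      (∀ u, u ∈ Q.topSet ↔ u ∈ (P₁ i).topSet ∨ u ∈ (P₂ i).topSet ∨ (u = v ∧ i ∈ A)) ∧
      (i ∈ D₁ ∪ D₂ → Q.HasFreeChain v) := by
    intro i
    by_cases hi : i ∈ A
    · obtain ⟨Q, hQv, hQtop⟩ := PathSystem.exists_join_of_hasFreeChain hne h₁ h₂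
        (hP₁.leavesBelow i) (hP₂.leavesBelow i) (hP₁.hasFreeChain i (mem_union_right _ hi))
        (hP₂.hasFreeChain i (mem_union_right _ hi))
      refine ⟨Q, hQv, fun u => ?_, fun hD => absurd hD (disjoint_left.mp hAD hi)⟩
      rw [hQtop, Set.mem_insert_iff, Set.mem_union]
      tauto
    · obtain ⟨Q, hQv, hQtop, hQ₁, hQ₂⟩ := PathSystem.exists_join hne h₁ h₂
        (hP₁.leavesBelow i) (hP₂.leavesBelow i)
      refine ⟨Q, hQv, fun u => by simp [hQtop, hi], fun hD => ?_⟩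
      rcases mem_union.mp hD with hD | hD
      · obtain ⟨l, hl, hlc, hfree⟩ := hP₁.hasFreeChain i (mem_union_left _ hD)
        exact ⟨l, hl, T.desc_trans hlc (T.desc_of_isChild h₁), hQ₁ l hlc hfree⟩
      · obtain ⟨l, hl, hlc, hfree⟩ := hP₂.hasFreeChain i (mem_union_left _ hD)
        exact ⟨l, hl, T.desc_trans hlc (T.desc_of_isChild h₂), hQ₂ l hlc hfree⟩
  choose Q hQv hQtop hQfree using hlayer
  refine ⟨Q, hQv, fun ⟨u, _⟩ hu => ?_, hQfree⟩
  rcases T.eq_or_desc_or_desc hne h₁ h₂ hu with rfl | hu₁ | hu₂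
  · rw [card_topSet_join_self h₁ h₂ hP₁.leavesBelow hP₂.leavesBelow hQtop, hA]
  · rw [card_topSet_join_of_desc hne h₁ h₂ hP₂.leavesBelow hQtop hu₁]
    exact hP₁.card_topSet _ hu₁
  · rw [card_topSet_join_of_desc hne.symm h₂ h₁ hP₁.leavesBelow
      (fun i u => (hQtop i u).trans or_left_comm) hu₂]
    exact hP₂.card_topSet _ hu₂

end Join

/-- The `z v` paths topped at `v` go to layers outside `D`, and the layers of `D` are shared
between the two children within their capacities. -/
theorem Feasible.exists_isDecomposition {m : ℕ} {z : {v // T.isInternal v} → ℤ}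
    (hz : T.Feasible (m : ℤ) z) (v : V) (D : Finset (Fin m)) (hD : (#D : ℤ) ≤ T.cap (m : ℤ) z v) :
    ∃ P, IsDecomposition z v D P := by
  induction v using T.binary_induction generalizing D with
  | leaf v hv => exact ⟨_, isDecomposition_empty hv D⟩
  | node v c₁ c₂ hne h₁ h₂ ih₁ ih₂ =>
    rw [T.cap_of_isChild hne h₁ h₂, le_min_iff] at hD
    set zv := z ⟨v, T.isInternal_of_isChild h₁⟩
    have hz₀ := (hz ⟨v, T.isInternal_of_isChild h₁⟩).1
    have hz₁ := (hz ⟨v, T.isInternal_of_isChild h₁⟩).2 c₁ h₁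
    have hz₂ := (hz ⟨v, T.isInternal_of_isChild h₁⟩).2 c₂ h₂
    obtain ⟨A, hAD, hA⟩ := exists_subset_card_eq (s := univ \ D) (n := zv.toNat) (by
      rw [card_sdiff_of_subset (subset_univ D), card_univ, Fintype.card_fin]
      omega)
    obtain ⟨D₁, hD₁, hD₁card, hD₂card⟩ := D.exists_subset_card_le_and_card_sdiff_le
      (a := (T.cap (m : ℤ) z c₁ - zv).toNat) (b := (T.cap (m : ℤ) z c₂ - zv).toNat) (by omega)
    have hAD' : Disjoint A D := disjoint_left.mpr fun i hi => (mem_sdiff.mp (hAD hi)).2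
    obtain ⟨P₁, hP₁⟩ := ih₁ (D₁ ∪ A) (by have := card_union_le D₁ A; omega)
    obtain ⟨P₂, hP₂⟩ := ih₂ (D \ D₁ ∪ A) (by have := card_union_le (D \ D₁) A; omega)
    rw [← union_sdiff_of_subset hD₁]
    exact hP₁.join hne h₁ h₂ hP₂ (by omega) (by rwa [union_sdiff_of_subset hD₁])

end RBT

theorem cfnmc_polytope_normal_general {V : Type} [Fintype V] [DecidableEq V] (T : RBT V)
    (m : ℕ) (z : {v : V // T.isInternal v} → ℤ)
    (hz : (fun v => (z v : ℝ)) ∈ (m : ℝ) • T.cfnmcPolytope) :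
    ∃ P : Fin m → PathSystem T, (fun v => (z v : ℝ)) = ∑ i, (P i).topVector := by
  obtain ⟨y, hy, hyz⟩ := Set.mem_smul_set.mp hz
  have hy₁ : T.Feasible 1 y :=
    convexHull_min (Set.range_subset_iff.mpr PathSystem.topVector_feasible)
      RBT.convex_setOf_feasible hy
  have hzm : T.Feasible (m : ℤ) z := by
    have := hy₁.smul (Nat.cast_nonneg (α := ℝ) m)
    rwa [mul_one, hyz, ← Int.cast_natCast, RBT.feasible_intCast_iff] at this
  obtain ⟨P, hP⟩ := hzm.exists_isDecomposition T.root ∅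
    (by simpa using hzm.cap_nonneg (Nat.cast_nonneg m) T.root)
  refine ⟨P, funext fun u => ?_⟩
  rw [PathSystem.sum_topVector_apply, ← hP.card_topSet u (T.reaches u)]
  norm_cast

/-- Let `T` be a rooted binary tree.  For every positive integer `m`,
every lattice point `z ∈ ℤ^{Int(T)}` lying in the dilate `m·R_T` can be written as a sum
of `m` top-vectors of systems of disjoint paths in `T` (so `R_T` is a normal lattice
polytope). -/
theorem cfnmc_polytope_normal {V : Type} [Fintype V] [DecidableEq V] (T : RBT V)
    (m : ℕ) (hm : 0 < m) (z : {v : V // T.isInternal v} → ℤ)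
    (hz : (fun v => (z v : ℝ)) ∈ (m : ℝ) • T.cfnmcPolytope) :
    ∃ P : Fin m → PathSystem T, (fun v => (z v : ℝ)) = ∑ i, (P i).topVector :=
  cfnmc_polytope_normal_general T m z hz
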